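/- Lemma 3 (commutation of supermap with partial traces): Let S : B(H_out)⊗B(H_in) → B(K_out)⊗B(K_in) be a deterministic supermap, i.e. completely positive and mapping positive F with Tr_{H_out}(F) = 1_{H_in} to positive operators with Tr_{K_out}(S(F)) = 1_{K_in}. Then there exists a unital completely positive map N : B(H_in) → B(K_in) such that Tr_{K_out}(S(C)) = N(Tr_{H_out}(C)) for every positive semidefinite C ∈ B(H_out)⊗B(H_in). -/

import Mathlib

noncomputable section

open Matrix Kronecker ComplexOrder

/-- The `n`-fold amplification `id_{M_n} ⊗ Φ` of a map between matrix algebras. -/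
def matAmp {α β : Type*} [Fintype α] [Fintype β] (n : ℕ)
    (Φ : Matrix α α ℂ → Matrix β β ℂ)
    (M : Matrix (Fin n × α) (Fin n × α) ℂ) : Matrix (Fin n × β) (Fin n × β) ℂ :=
  fun p q => Φ (fun i j => M (p.1, i) (q.1, j)) p.2 q.2

/-- A map between matrix algebras is completely positive if all its amplifications
preserve positive semidefiniteness. -/
def IsCPMap {α β : Type*} [Fintype α] [Fintype β]
    (Φ : Matrix α α ℂ → Matrix β β ℂ) : Prop :=
  ∀ (n : ℕ) (M : Matrix (Fin n × α) (Fin n × α) ℂ),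
    M.PosSemidef → (matAmp n Φ M).PosSemidef

/-- Partial trace over the first tensor factor. -/
def ptrFst {α β : Type*} [Fintype α] (M : Matrix (α × β) (α × β) ℂ) : Matrix β β ℂ :=
  fun i j => ∑ a, M (a, i) (a, j)

/-- The Choi matrix `∑_{i,j} Φ(E_{ij}) ⊗ E_{ij}` of a map between matrix algebras. -/
def choiFun {a b : ℕ} (Φ : Matrix (Fin a) (Fin a) ℂ → Matrix (Fin b) (Fin b) ℂ) :
    Matrix (Fin b × Fin a) (Fin b × Fin a) ℂ :=
  fun p q => Φ (Matrix.single p.2 q.2 1) p.1 q.1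

section helpers

set_option linter.unusedSectionVars false

variable {α β : Type*} [Fintype α] [Fintype β]

lemma posSemidef_sum {ι n : Type*} [Fintype n] (s : Finset ι) (f : ι → Matrix n n ℂ)
    (h : ∀ i ∈ s, (f i).PosSemidef) : (∑ i ∈ s, f i).PosSemidef :=
  Finset.sum_induction f _ (fun _ _ ha hb => ha.add hb) .zero h

lemma ptrFst_eq_sum (M : Matrix (α × β) (α × β) ℂ) :
    ptrFst M = ∑ a, M.submatrix (Prod.mk a) (Prod.mk a) := by
  ext i j
  simp [ptrFst, Matrix.sum_apply]

lemma ptrFst_posSemidef {M : Matrix (α × β) (α × β) ℂ} (hM : M.PosSemidef) :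
    (ptrFst M).PosSemidef := by
  rw [ptrFst_eq_sum]
  exact posSemidef_sum _ _ fun a _ => hM.submatrix _

lemma ptrFst_add (M N : Matrix (α × β) (α × β) ℂ) :
    ptrFst (M + N) = ptrFst M + ptrFst N := by
  ext i j; simp [ptrFst, Finset.sum_add_distrib]

lemma ptrFst_smul (c : ℂ) (M : Matrix (α × β) (α × β) ℂ) :
    ptrFst (c • M) = c • ptrFst M := by
  ext i j; simp [ptrFst, Finset.mul_sum]

lemma PosSemidef.smul_nonneg' {n : Type*} [Fintype n] {M : Matrix n n ℂ}
    (hM : M.PosSemidef) {c : ℂ} (hc : 0 ≤ c) : (c • M).PosSemidef := by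
  have hcr : star c = c := by
    rw [Complex.star_def, Complex.conj_eq_iff_im]
    exact ((Complex.nonneg_iff.mp hc).2).symm
  refine PosSemidef.of_dotProduct_mulVec_nonneg ?_ ?_
  · rw [IsHermitian, conjTranspose_smul, hcr, hM.1.eq]
  · intro x
    rw [smul_mulVec, dotProduct_smul, smul_eq_mul]
    exact mul_nonneg hc (hM.dotProduct_mulVec_nonneg x)

lemma kron_conjTranspose (A : Matrix α α ℂ) (B : Matrix β β ℂ) :
    (A ⊗ₖ B)ᴴ = Aᴴ ⊗ₖ Bᴴ := by
  ext ⟨a, i⟩ ⟨b, j⟩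
  simp [conjTranspose_apply, mul_comm]

lemma kron_posSemidef {A : Matrix α α ℂ} {B : Matrix β β ℂ}
    (hA : A.PosSemidef) (hB : B.PosSemidef) : (A ⊗ₖ B).PosSemidef := by
  exact hA.kronecker hB

/-- Any PSD matrix is dominated by a positive multiple of the identity. -/
lemma exists_smul_one_sub_posSemidef {n : Type*} [Fintype n] [DecidableEq n]
    {ρ : Matrix n n ℂ} (hρ : ρ.PosSemidef) :
    ∃ c : ℝ, 0 < c ∧ ((c : ℂ) • 1 - ρ).PosSemidef := by
  set lam := hρ.1.eigenvalues with hlam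
  refine ⟨∑ i, lam i + 1,
    by have h := Finset.sum_nonneg (fun i (_ : i ∈ Finset.univ) => hρ.eigenvalues_nonneg i); linarith, ?_⟩
  set c : ℝ := ∑ i, lam i + 1
  set U : Matrix n n ℂ := (hρ.1.eigenvectorUnitary : Matrix n n ℂ)
  have hU : U * star U = 1 := (Matrix.mem_unitaryGroup_iff).mp hρ.1.eigenvectorUnitary.2
  have hdecomp : (c : ℂ) • 1 - ρ =
      U * ((c : ℂ) • 1 - diagonal (RCLike.ofReal ∘ lam)) * star U := by
    rw [Matrix.mul_sub, Matrix.sub_mul, Matrix.mul_smul, Matrix.smul_mul, mul_one, hU]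
    exact congrArg _ hρ.1.spectral_theorem
  rw [hdecomp]
  have : ((c : ℂ) • 1 - diagonal (RCLike.ofReal ∘ lam)) =
      diagonal (fun i => ((c - lam i : ℝ) : ℂ)) := by
    ext i j
    rcases eq_or_ne i j with rfl | h
    · simp
    · simp [Matrix.one_apply_ne h, Matrix.diagonal_apply_ne _ h]
  rw [this, show star U = Uᴴ from rfl]
  refine PosSemidef.mul_mul_conjTranspose_same ?_ U
  refine Matrix.posSemidef_diagonal_iff.mpr fun i => ?_
  rw [Complex.zero_le_real]
  have h1 : lam i ≤ ∑ j, lam j :=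
    Finset.single_le_sum (fun j _ => hρ.eigenvalues_nonneg j) (Finset.mem_univ i)
  simp only [c]
  linarith

/-- `ptrFst` as a linear map. -/
def ptrFstL (α β : Type*) [Fintype α] [Fintype β] :
    Matrix (α × β) (α × β) ℂ →ₗ[ℂ] Matrix β β ℂ where
  toFun := ptrFst
  map_add' := ptrFst_add
  map_smul' := ptrFst_smul

/-- Tensoring on the left with a fixed matrix, as a linear map. -/
def kronL (A : Matrix α α ℂ) :
    Matrix β β ℂ →ₗ[ℂ] Matrix (α × β) (α × β) ℂ where
  toFun := fun ρ => A ⊗ₖ ρ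
  map_add' := by intro x y; ext ⟨a, i⟩ ⟨b, j⟩; simp [mul_add]
  map_smul' := by intro c x; ext ⟨a, i⟩ ⟨b, j⟩; simp [mul_smul_comm]; ring

end helpers

/-- Lemma 3: for a deterministic supermap `S` there exists a unital completely positive
map `N : B(H_in) → B(K_in)` with `Tr_{K_out}(S(C)) = N(Tr_{H_out}(C))` for all positive `C`. -/
theorem supermap_commutes_with_partial_traces (hi ho ki ko : ℕ)
    (S : Matrix (Fin ho × Fin hi) (Fin ho × Fin hi) ℂ →ₗ[ℂ]
         Matrix (Fin ko × Fin ki) (Fin ko × Fin ki) ℂ)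
    (hCP : IsCPMap S)
    (hTP : ∀ F : Matrix (Fin ho × Fin hi) (Fin ho × Fin hi) ℂ,
      F.PosSemidef → ptrFst F = 1 → (S F).PosSemidef ∧ ptrFst (S F) = 1) :
    ∃ N : Matrix (Fin hi) (Fin hi) ℂ →ₗ[ℂ] Matrix (Fin ki) (Fin ki) ℂ,
      IsCPMap N ∧ N 1 = 1 ∧
      ∀ C : Matrix (Fin ho × Fin hi) (Fin ho × Fin hi) ℂ, C.PosSemidef →
        ptrFst (S C) = N (ptrFst C) := by
  rcases Nat.eq_zero_or_pos ho with hho | hho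
  · -- degenerate case: the output space `H_out` is trivial, every `C` is zero
    subst hho
    have hCzero : ∀ C : Matrix (Fin 0 × Fin hi) (Fin 0 × Fin hi) ℂ, C = 0 := by
      intro C; ext ⟨p, i⟩; exact p.elim0
    have hptrS0 : ptrFst (S 0) = 0 := by
      rw [map_zero]; ext i j; simp [ptrFst]
    rcases Nat.eq_zero_or_pos hi with hhi | hhi
    · -- `hi = 0` as well: derive `0 = 1` on `K_in` from `hTP`
      subst hhi
      have h01 : (0 : Matrix (Fin ki) (Fin ki) ℂ) = 1 := by
        have := (hTP 0 .zero (by ext i; exact i.elim0)).2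
        rwa [hptrS0] at this
      refine ⟨0, ?_, ?_, ?_⟩
      · intro n M _
        have : matAmp n (⇑(0 : Matrix (Fin 0) (Fin 0) ℂ →ₗ[ℂ] Matrix (Fin ki) (Fin ki) ℂ)) M = 0 := by
          funext p q; simp [matAmp]; rfl
        rw [this]; exact .zero
      · simpa using h01
      · intro C hC
        rw [hCzero C, map_zero]
        ext i j
        simp [ptrFst]
    · -- `hi > 0` : take `N ρ = (tr ρ / hi) • 1`
      refine ⟨{ toFun := fun ρ => ((hi : ℂ)⁻¹ * ρ.trace) • 1,
                map_add' := by intro x y; simp [Matrix.trace_add, mul_add, add_smul],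
                map_smul' := by intro c x; simp [Matrix.trace_smul, smul_smul]; ring_nf },
              ?_, ?_, ?_⟩
      · intro n M hM
        show (matAmp n (fun ρ : Matrix (Fin hi) (Fin hi) ℂ =>
          ((hi : ℂ)⁻¹ * ρ.trace) • 1) M).PosSemidef
        have key : matAmp n (fun ρ : Matrix (Fin hi) (Fin hi) ℂ => ((hi : ℂ)⁻¹ * ρ.trace) • 1) M
            = (hi : ℂ)⁻¹ • (((1 : Matrix (Fin ki) (Fin ki) ℂ) ⊗ₖ
                ptrFst (M.submatrix (fun x : Fin hi × Fin n => (x.2, x.1))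
                  (fun x : Fin hi × Fin n => (x.2, x.1)))).submatrix
                (fun x : Fin n × Fin ki => (x.2, x.1)) (fun x : Fin n × Fin ki => (x.2, x.1))) := by
          ext ⟨p, i⟩ ⟨q, j⟩
          by_cases h : i = j <;>
            simp [h, matAmp, ptrFst, Matrix.trace, Matrix.diag, Matrix.one_apply, Finset.mul_sum]
        rw [key]
        refine PosSemidef.smul_nonneg'
          ((kron_posSemidef .one (ptrFst_posSemidef (hM.submatrix _))).submatrix _) ?_
        rw [← Complex.ofReal_natCast, ← Complex.ofReal_inv]
        exact Complex.zero_le_real.mpr (by positivity)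
      · simp [Matrix.trace_one]
        rw [inv_mul_cancel₀ (by exact_mod_cast hhi.ne' : (hi : ℂ) ≠ 0)]
        simp
      · intro C hC
        rw [hCzero C, map_zero]
        ext i j
        simp [ptrFst, Matrix.trace, Matrix.diag]
  · -- main case `ho > 0`
    set σ : Matrix (Fin ho) (Fin ho) ℂ := (ho : ℂ)⁻¹ • 1 with hσdef
    have hhoC : ((ho : ℂ)) ≠ 0 := by exact_mod_cast hho.ne'
    have hσ : σ.PosSemidef := by
      refine PosSemidef.smul_nonneg' .one ?_
      rw [← Complex.ofReal_natCast, ← Complex.ofReal_inv]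
      exact Complex.zero_le_real.mpr (by positivity)
    have hptr_sig : ∀ X : Matrix (Fin hi) (Fin hi) ℂ, ptrFst (σ ⊗ₖ X) = X := by
      intro X
      ext i j
      simp only [ptrFst, hσdef, kroneckerMap_apply, Matrix.smul_apply, Matrix.one_apply_eq,
        smul_eq_mul, mul_one, ← Finset.sum_mul, Finset.sum_const, Finset.card_univ,
        Fintype.card_fin, nsmul_eq_mul]
      rw [mul_inv_cancel₀ hhoC, one_mul]
    set N : Matrix (Fin hi) (Fin hi) ℂ →ₗ[ℂ] Matrix (Fin ki) (Fin ki) ℂ :=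
      (ptrFstL (Fin ko) (Fin ki)).comp (S.comp (kronL σ)) with hNdef
    have key : ∀ C : Matrix (Fin ho × Fin hi) (Fin ho × Fin hi) ℂ, C.PosSemidef →
        ptrFst (S C) = ptrFst (S (σ ⊗ₖ ptrFst C)) := by
      intro C hC
      have hρ := ptrFst_posSemidef hC
      obtain ⟨c, hc, hP⟩ := exists_smul_one_sub_posSemidef hρ
      set P : Matrix (Fin hi) (Fin hi) ℂ := (c : ℂ) • 1 - ptrFst C with hPdef
      set D : Matrix (Fin ho × Fin hi) (Fin ho × Fin hi) ℂ := σ ⊗ₖ P with hDdef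
      have hD : D.PosSemidef := kron_posSemidef hσ hP
      have hcinv : (0 : ℂ) ≤ ((c : ℂ))⁻¹ := by
        rw [← Complex.ofReal_inv]
        exact Complex.zero_le_real.mpr (by positivity)
      have hF : ∀ C' : Matrix (Fin ho × Fin hi) (Fin ho × Fin hi) ℂ, C'.PosSemidef →
          ptrFst C' = ptrFst C → ptrFst (S (((c : ℂ))⁻¹ • (C' + D))) = 1 := by
        intro C' hC' hptr
        refine (hTP _ (PosSemidef.smul_nonneg' (hC'.add hD) hcinv) ?_).2
        rw [ptrFst_smul, ptrFst_add, hptr, hDdef, hptr_sig, hPdef]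
        rw [add_sub_cancel, smul_smul, inv_mul_cancel₀ (by exact_mod_cast hc.ne' : ((c:ℂ)) ≠ 0),
          one_smul]
      have h1 := hF C hC rfl
      have h2 := hF (σ ⊗ₖ ptrFst C) (kron_posSemidef hσ hρ) (hptr_sig _)
      rw [_root_.map_smul, _root_.map_add, ptrFst_smul, ptrFst_add] at h1 h2
      have h3 := h1.trans h2.symm
      have h4 := smul_right_injective (Matrix (Fin ki) (Fin ki) ℂ)
        (inv_ne_zero (by exact_mod_cast hc.ne' : ((c:ℂ)) ≠ 0)) h3
      exact add_right_cancel h4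
    refine ⟨N, ?_, ?_, ?_⟩
    · intro n M hM
      show (matAmp n (fun ρ => ptrFst (S (σ ⊗ₖ ρ))) M).PosSemidef
      have step1 : matAmp n (fun ρ : Matrix (Fin hi) (Fin hi) ℂ => σ ⊗ₖ ρ) M
          = (σ ⊗ₖ M).submatrix (fun x : Fin n × (Fin ho × Fin hi) => (x.2.1, (x.1, x.2.2)))
            (fun x : Fin n × (Fin ho × Fin hi) => (x.2.1, (x.1, x.2.2))) := by
        ext ⟨p, a, i⟩ ⟨q, b, j⟩
        rfl
      have step2 : (matAmp n (fun ρ : Matrix (Fin hi) (Fin hi) ℂ => σ ⊗ₖ ρ) M).PosSemidef := by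
        rw [step1]
        exact (kron_posSemidef hσ hM).submatrix _
      have step3 := hCP n _ step2
      have step4 : matAmp n (fun ρ => ptrFst (S (σ ⊗ₖ ρ))) M
          = ptrFst ((matAmp n (⇑S) (matAmp n (fun ρ : Matrix (Fin hi) (Fin hi) ℂ => σ ⊗ₖ ρ) M)).submatrix
              (fun x : Fin ko × (Fin n × Fin ki) => (x.2.1, (x.1, x.2.2)))
              (fun x : Fin ko × (Fin n × Fin ki) => (x.2.1, (x.1, x.2.2)))) := by
        ext ⟨p, i⟩ ⟨q, j⟩
        rfl
      rw [step4]
      exact ptrFst_posSemidef (step3.submatrix _)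
    · show ptrFst (S (σ ⊗ₖ 1)) = 1
      exact (hTP _ (kron_posSemidef hσ .one) (hptr_sig 1)).2
    · intro C hC
      rw [key C hC]
      rfl
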